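/- For closed λ-terms t₁ and t₂, the term nodes ⟨t₁, ε⟩ and ⟨t₂, ε⟩ are bisimilar if and only if t₁ = t₂. -/

import Mathlib

namespace HashAlpha

/-- g-terms: λ-terms with de Bruijn indices, extended with global variables `gvar t`. -/
inductive GTerm : Type
  | var : ℕ → GTerm
  | app : GTerm → GTerm → GTerm
  | lam : GTerm → GTerm
  | gvar : GTerm → GTerm
  deriving DecidableEq

/-- A g-term is a pure λ-term if it contains no global variables. -/
def GTerm.IsPure : GTerm → Prop
  | .var _ => True
  | .app a b => a.IsPure ∧ b.IsPure
  | .lam a => a.IsPure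
  | .gvar _ => False

/-- Directions for term positions: ↓, ↙, ↘. -/
inductive Dir : Type
  | down | left | right
  deriving DecidableEq

/-- A term position is a word over {↓, ↙, ↘}. -/
abbrev Pos := List Dir

/-- `|p|_λ`: the number of ↓'s in a position. -/
def lamDepth (p : Pos) : ℕ := p.count Dir.down

/-- Term indexing `t[p]` (partial; does not descend into global variables). -/
def GTerm.index : GTerm → Pos → Option GTerm
  | t, [] => some t
  | .app a _, .left :: p => a.index p
  | .app _ b, .right :: p => b.index p
  | .lam a, .down :: p => a.index p
  | _, _ => none

/-- `valid(t)`: the set of positions where `t[p]` is defined. -/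
def Valid (t : GTerm) : Set Pos := {p | (t.index p).isSome}

/-- `vars(t)`: positions of variables. -/
def Vars (t : GTerm) : Set Pos := {p | ∃ i, t.index p = some (.var i)}

/-- `free(t)`: positions of free variables. -/
def Free (t : GTerm) : Set Pos :=
  {p | ∃ i, t.index p = some (.var i) ∧ lamDepth p ≤ i}

/-- A term is closed if it has no free variables. -/
def Closed (t : GTerm) : Prop := Free t = ∅

/-- `p` is locally closed in `t`: every free variable of `t[p]` is also free in `t`. -/
def LocallyClosed (t : GTerm) (p : Pos) : Prop :=
  p ∈ Valid t ∧ ∀ u, t.index p = some u → ∀ q ∈ Free u, p ++ q ∈ Free t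

/-- Subtract `d0` from every free variable (`d` is the current binder depth). -/
def declift (d0 : ℕ) : GTerm → ℕ → GTerm
  | .var j, d => if d ≤ j then .var (j - d0) else .var j
  | .app a b, d => .app (declift d0 a d) (declift d0 b d)
  | .lam a, d => .lam (declift d0 a (d + 1))
  | .gvar a, _ => .gvar a

/-- The lift `⟨t⟩p`: equal to `t[p]` except every free variable of `t[p]` is
decremented by `|p|_λ`. -/
def liftAt (t : GTerm) (p : Pos) : Option GTerm :=
  (t.index p).map (fun u => declift (lamDepth p) u 0)

/-- Transition labels: ↓, ↙, ↘ and ↑. -/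
inductive Lab : Type
  | down | left | right | up
  deriving DecidableEq

def Lab.ofDir : Dir → Lab
  | .down => .down
  | .left => .left
  | .right => .right

/-- Transitions between term nodes. -/
inductive Trans : GTerm × Pos → Lab → GTerm × Pos → Prop
  | dir (t : GTerm) (p : Pos) (x : Dir) :
      (p ++ [x]) ∈ Valid t → Trans (t, p) (Lab.ofDir x) (t, p ++ [x])
  | up (t : GTerm) (q r : Pos) :
      t.index (q ++ Dir.down :: r) = some (.var (lamDepth r)) →
      Trans (t, q ++ Dir.down :: r) Lab.up (t, q)

/-- `R` is a bisimulation. -/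
def IsBisim (R : GTerm × Pos → GTerm × Pos → Prop) : Prop :=
  ∀ n₁ n₂, R n₁ n₂ → ∀ x : Lab,
    (∀ n₁', Trans n₁ x n₁' → ∃ n₂', Trans n₂ x n₂' ∧ R n₁' n₂') ∧
    (∀ n₂', Trans n₂ x n₂' → ∃ n₁', Trans n₁ x n₁' ∧ R n₁' n₂')

/-- Two nodes are bisimilar when some bisimulation relates them. -/
def Bisim (n₁ n₂ : GTerm × Pos) : Prop := ∃ R, IsBisim R ∧ R n₁ n₂

/-- `(t, p)` is a term node: `t` is closed and `p ∈ valid(t)`. -/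
def IsNode (t : GTerm) (p : Pos) : Prop := Closed t ∧ p ∈ Valid t

/-- A single fork between term nodes (let-abs rule or closed rule). -/
def SingleFork (n₁ n₂ : GTerm × Pos) : Prop :=
  (∃ t p q₁ q₂ r u,
      n₁ = (t, p ++ q₁ ++ r) ∧ n₂ = (t, p ++ q₂ ++ r) ∧
      IsNode t (p ++ q₁ ++ r) ∧ IsNode t (p ++ q₂ ++ r) ∧
      t.index p = some u ∧ LocallyClosed u q₁ ∧ liftAt u q₁ = liftAt u q₂) ∨
  (∃ t₁ t₂ p₁ p₂ r u,
      n₁ = (t₁, p₁ ++ r) ∧ n₂ = (t₂, p₂ ++ r) ∧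
      IsNode t₁ (p₁ ++ r) ∧ IsNode t₂ (p₂ ++ r) ∧
      t₁.index p₁ = some u ∧ Closed u ∧ t₂.index p₂ = some u)

/-- Fork equivalence: the transitive closure of single forks. -/
def ForkEquiv : GTerm × Pos → GTerm × Pos → Prop := Relation.TransGen SingleFork

/-- Shift free variables ≥ `c` up by `d`. -/
def shiftAux (c d : ℕ) : GTerm → GTerm
  | .var j => if j < c then .var j else .var (j + d)
  | .app a b => .app (shiftAux c d a) (shiftAux c d b)
  | .lam a => .lam (shiftAux (c + 1) d a)
  | .gvar a => .gvar a

/-- Capture-avoiding substitution of free variable `i` by `u` (at current depth `d`). -/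
def substAux (i : ℕ) (u : GTerm) : ℕ → GTerm → GTerm
  | d, .var j => if j = i + d then shiftAux 0 d u else .var j
  | d, .app a b => .app (substAux i u d a) (substAux i u d b)
  | d, .lam a => .lam (substAux i u (d + 1) a)
  | _, .gvar a => .gvar a

/-- `t[i := u]`: capture-avoiding substitution of variable `i` by `u` in `t`. -/
def subst (i : ℕ) (u : GTerm) (t : GTerm) : GTerm := substAux i u 0 t

/-- Simultaneous capture-avoiding substitution of variable `i` by `σᵢ`
(at current depth `d`). -/
def msubstAux (σ : List GTerm) : ℕ → GTerm → GTerm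
  | d, .var j =>
      if j < d then .var j else shiftAux 0 d (σ.getD (j - d) (.var (j - d)))
  | d, .app a b => .app (msubstAux σ d a) (msubstAux σ d b)
  | d, .lam a => .lam (msubstAux σ (d + 1) a)
  | _, .gvar a => .gvar a

/-- `tσ`: simultaneous substitution of each variable `i` by the `i`-th element of `σ`. -/
def msubst (σ : List GTerm) (t : GTerm) : GTerm := msubstAux σ 0 t

/-- Term size (the term summary `|t|`); global variables count as leaves. -/
def gsize : GTerm → ℕ
  | .var _ => 1
  | .gvar _ => 1
  | .app a b => gsize a + gsize b + 1
  | .lam a => gsize a + 1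

theorem gsize_shiftAux (c d : ℕ) (t : GTerm) : gsize (shiftAux c d t) = gsize t := by
  induction t generalizing c with
  | var j => simp only [shiftAux]; split <;> rfl
  | app a b iha ihb => simp [shiftAux, gsize, iha, ihb]
  | lam a ih => simp [shiftAux, gsize, ih]
  | gvar a => rfl

theorem gsize_substAux_gvar (i : ℕ) (w : GTerm) (d : ℕ) (t : GTerm) :
    gsize (substAux i (.gvar w) d t) = gsize t := by
  induction t generalizing d with
  | var j => simp only [substAux]; split <;> rfl
  | app a b iha ihb => simp [substAux, gsize, iha, ihb]
  | lam a ih => simp [substAux, gsize, ih]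
  | gvar a => rfl

theorem gsize_msubstAux (σ : List GTerm) (h : ∀ u ∈ σ, ∃ w, u = .gvar w)
    (d : ℕ) (t : GTerm) : gsize (msubstAux σ d t) = gsize t := by
  induction t generalizing d with
  | var j =>
    simp only [msubstAux]
    split
    · rfl
    · rw [gsize_shiftAux]
      rcases Nat.lt_or_ge (j - d) σ.length with hl | hl
      · rw [List.getD_eq_getElem _ _ hl]
        obtain ⟨w, hw⟩ := h _ (List.getElem_mem hl)
        rw [hw]; rfl
      · rw [List.getD_eq_default _ _ hl]; rfl
  | app a b iha ihb => simp [msubstAux, gsize, iha, ihb]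
  | lam a ih => simp [msubstAux, gsize, ih]
  | gvar a => rfl

theorem gsize_msubst (σ : List GTerm) (h : ∀ u ∈ σ, ∃ w, u = .gvar w)
    (t : GTerm) : gsize (msubst σ t) = gsize t :=
  gsize_msubstAux σ h 0 t

/-- The naive globalization procedure. -/
def globalizeNaive : GTerm → GTerm
  | .lam t => .lam (globalizeNaive (subst 0 (.gvar (.lam t)) t))
  | .app t u => .app (globalizeNaive t) (globalizeNaive u)
  | .gvar t => .gvar t
  | .var i => .var i
termination_by t => gsize t
decreasing_by
  · simp only [subst, gsize_substAux_gvar, gsize]; omega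
  · simp only [gsize]; omega
  · simp only [gsize]; omega

/-- The strongly connected component of a closed g-term: positions all of whose
nonempty prefixes index open terms. -/
def SCC (t : GTerm) : Set Pos :=
  {p | p ∈ Valid t ∧ ∀ p' u, p' ≠ [] → p' <+: p → t.index p' = some u → ¬ Closed u}

/-- `duplicates(t)`: strict subterms in the SCC of `t` whose term summary (size)
is not unique within the SCC. -/
def duplicates (t : GTerm) : Set GTerm :=
  {u | ∃ p q v, p ∈ SCC t ∧ q ∈ SCC t ∧ p ≠ [] ∧ q ≠ [] ∧ p ≠ q ∧
      t.index p = some u ∧ t.index q = some v ∧ gsize u = gsize v}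

open Classical in
mutual
/-- Efficient globalization. -/
noncomputable def globalize (r : GTerm) : GTerm :=
  globalizeScc r [] (by simp) r
termination_by (gsize r, 2)
decreasing_by
  apply Prod.Lex.right; omega

noncomputable def globalizeScc (r : GTerm) (σ : List GTerm)
    (h : ∀ u ∈ σ, ∃ w, u = GTerm.gvar w) : GTerm → GTerm
  | .lam t => .lam (globalizeStep r (.gvar (.app r t) :: σ)
      (by
        intro u hu
        rcases List.mem_cons.mp hu with h' | h'
        · exact ⟨_, h'⟩
        · exact h u h') t)
  | .app t u => .app (globalizeStep r σ h t) (globalizeStep r σ h u)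
  | .gvar t => .gvar t
  | .var i => msubst σ (.var i)
termination_by t => (gsize t, 1)
decreasing_by
  · apply Prod.Lex.left; simp only [gsize]; omega
  · apply Prod.Lex.left; simp only [gsize]; omega
  · apply Prod.Lex.left; simp only [gsize]; omega

noncomputable def globalizeStep (r : GTerm) (σ : List GTerm)
    (h : ∀ u ∈ σ, ∃ w, u = GTerm.gvar w) (t : GTerm) : GTerm :=
  if Closed t ∨ t ∈ duplicates r then globalize (msubst σ t)
  else globalizeScc r σ h t
termination_by (gsize t, 3)
decreasing_by
  · rw [gsize_msubst σ h]; apply Prod.Lex.right; omega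
  · apply Prod.Lex.right; omega
end

/-! ### Auxiliary lemmas for Statement 3 -/

theorem GTerm.index_append : ∀ (p : Pos) (t : GTerm) (q : Pos),
    GTerm.index t (p ++ q) = (GTerm.index t p).bind (fun u => u.index q)
  | [], t, q => by simp [GTerm.index]
  | x :: p, t, q => by
    cases t <;> cases x <;> simp [GTerm.index, GTerm.index_append p]

theorem gsize_pos (t : GTerm) : 0 < gsize t := by
  cases t <;> simp only [gsize] <;> omega

theorem length_lt_gsize : ∀ (p : Pos) (t : GTerm), (GTerm.index t p).isSome →
    p.length < gsize t := by
  intro p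
  induction p with
  | nil => intro t _; simpa using gsize_pos t
  | cons x p ih =>
    intro t h
    cases t <;> cases x <;>
      simp only [GTerm.index, Option.isSome_none, Option.isSome_some,
        Bool.false_eq_true] at h <;>
      · simp only [List.length_cons, gsize]
        have := ih _ h
        omega

theorem valid_prefix {t : GTerm} {p q : Pos} (hq : q <+: p) (hp : p ∈ Valid t) :
    q ∈ Valid t := by
  obtain ⟨s, rfl⟩ := hq
  simp only [Valid, Set.mem_setOf_eq, GTerm.index_append] at hp ⊢
  cases h : GTerm.index t q with
  | none => rw [h] at hp; simp at hp
  | some u => simp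

theorem lamDepth_append (p q : Pos) : lamDepth (p ++ q) = lamDepth p + lamDepth q :=
  List.count_append

theorem var_lt_of_closed {t : GTerm} {p : Pos} {i : ℕ} (c : Closed t)
    (h : GTerm.index t p = some (.var i)) : i < lamDepth p := by
  by_contra hc
  have hmem : p ∈ Free t := ⟨i, h, le_of_not_gt hc⟩
  rw [Closed] at c
  rw [c] at hmem
  exact hmem

theorem isPure_index : ∀ (p : Pos) (t u : GTerm), t.IsPure →
    GTerm.index t p = some u → u.IsPure
  | [], t, u, hp, h => by simp only [GTerm.index, Option.some_inj] at h; subst h; exact hp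
  | x :: p, t, u, hp, h => by
    cases t <;> cases x <;> simp only [GTerm.index] at h <;> try exact absurd h (by simp)
    · exact isPure_index p _ _ hp.1 h
    · exact isPure_index p _ _ hp.2 h
    · exact isPure_index p _ _ (by simpa [GTerm.IsPure] using hp) h

theorem lamDepth_cons (x : Dir) (p : Pos) :
    lamDepth (x :: p) = (if x = Dir.down then 1 else 0) + lamDepth p := by
  cases x <;> simp [lamDepth, List.count_cons, Nat.add_comm]

theorem exists_split : ∀ (p : Pos) (i : ℕ), i < lamDepth p →
    ∃ q r, p = q ++ Dir.down :: r ∧ lamDepth r = i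
  | [], i, h => by simp [lamDepth] at h
  | x :: p, i, h => by
    cases x with
    | down =>
      rcases Nat.lt_or_ge i (lamDepth p) with h' | h'
      · obtain ⟨q, r, rfl, hr⟩ := exists_split p i h'
        exact ⟨Dir.down :: q, r, rfl, hr⟩
      · refine ⟨[], p, rfl, ?_⟩
        rw [lamDepth_cons] at h
        simp at h
        omega
    | left =>
      have h' : i < lamDepth p := by simpa [lamDepth, List.count_cons] using h
      obtain ⟨q, r, rfl, hr⟩ := exists_split p i h'
      exact ⟨Dir.left :: q, r, rfl, hr⟩
    | right =>
      have h' : i < lamDepth p := by simpa [lamDepth, List.count_cons] using h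
      obtain ⟨q, r, rfl, hr⟩ := exists_split p i h'
      exact ⟨Dir.right :: q, r, rfl, hr⟩

/-! ### Bisimulation machinery -/

theorem bisim_isBisim : IsBisim Bisim := by
  rintro n₁ n₂ ⟨R, hR, hn⟩ x
  constructor
  · intro n₁' h₁
    obtain ⟨n₂', ht, hr⟩ := (hR n₁ n₂ hn x).1 n₁' h₁
    exact ⟨n₂', ht, R, hR, hr⟩
  · intro n₂' h₂
    obtain ⟨n₁', ht, hr⟩ := (hR n₁ n₂ hn x).2 n₂' h₂
    exact ⟨n₁', ht, R, hR, hr⟩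

theorem bisim_refl (n : GTerm × Pos) : Bisim n n := by
  refine ⟨Eq, ?_, rfl⟩
  rintro n₁ n₂ rfl x
  exact ⟨fun n' h => ⟨n', h, rfl⟩, fun n' h => ⟨n', h, rfl⟩⟩

theorem bisim_symm {n₁ n₂ : GTerm × Pos} (h : Bisim n₁ n₂) : Bisim n₂ n₁ := by
  refine ⟨fun a b => Bisim b a, ?_, h⟩
  intro a b hb x
  exact ⟨(bisim_isBisim b a hb x).2, (bisim_isBisim b a hb x).1⟩

theorem bisim_trans {a b c : GTerm × Pos} (h₁ : Bisim a b) (h₂ : Bisim b c) :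
    Bisim a c := by
  refine ⟨fun x z => ∃ y, Bisim x y ∧ Bisim y z, ?_, b, h₁, h₂⟩
  rintro n₁ n₃ ⟨n₂, hb₁, hb₂⟩ x
  constructor
  · intro n₁' ht
    obtain ⟨n₂', ht₂, hb₁'⟩ := (bisim_isBisim _ _ hb₁ x).1 _ ht
    obtain ⟨n₃', ht₃, hb₂'⟩ := (bisim_isBisim _ _ hb₂ x).1 _ ht₂
    exact ⟨n₃', ht₃, n₂', hb₁', hb₂'⟩
  · intro n₃' ht
    obtain ⟨n₂', ht₂, hb₂'⟩ := (bisim_isBisim _ _ hb₂ x).2 _ ht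
    obtain ⟨n₁', ht₁, hb₁'⟩ := (bisim_isBisim _ _ hb₁ x).2 _ ht₂
    exact ⟨n₁', ht₁, n₂', hb₁', hb₂'⟩

theorem bisim_step {n₁ n₂ n₁' : GTerm × Pos} {x : Lab} (h : Bisim n₁ n₂)
    (ht : Trans n₁ x n₁') : ∃ n₂', Trans n₂ x n₂' ∧ Bisim n₁' n₂' :=
  (bisim_isBisim _ _ h x).1 _ ht

/-! ### Transition inversions -/

theorem ofDir_ne_up (x : Dir) : Lab.ofDir x ≠ Lab.up := by cases x <;> simp [Lab.ofDir]

theorem ofDir_inj {x y : Dir} (h : Lab.ofDir x = Lab.ofDir y) : x = y := by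
  cases x <;> cases y <;> simp_all [Lab.ofDir]

theorem trans_cases {n n' : GTerm × Pos} {l : Lab} (h : Trans n l n') :
    (∃ t p x, n = (t, p) ∧ l = Lab.ofDir x ∧ n' = (t, p ++ [x]) ∧ (p ++ [x]) ∈ Valid t) ∨
    (∃ t q r, n = (t, q ++ Dir.down :: r) ∧ l = Lab.up ∧
      GTerm.index t (q ++ Dir.down :: r) = some (.var (lamDepth r)) ∧ n' = (t, q)) := by
  cases h with
  | dir t p x hv => exact Or.inl ⟨t, p, x, rfl, rfl, rfl, hv⟩
  | up t q r hh => exact Or.inr ⟨t, q, r, rfl, rfl, hh, rfl⟩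

theorem trans_dir_inv {t : GTerm} {p : Pos} {x : Dir} {n' : GTerm × Pos}
    (h : Trans (t, p) (Lab.ofDir x) n') :
    n' = (t, p ++ [x]) ∧ (p ++ [x]) ∈ Valid t := by
  rcases trans_cases h with ⟨t', p', y, he, hl, hn, hv⟩ | ⟨t', q, r, he, hl, _, _⟩
  · injection he with h1 h2
    subst h1; subst h2
    obtain rfl : x = y := ofDir_inj hl
    exact ⟨hn, hv⟩
  · exact ((ofDir_ne_up x) hl).elim

theorem trans_up_inv {t : GTerm} {p : Pos} {n' : GTerm × Pos}
    (h : Trans (t, p) Lab.up n') :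
    ∃ q r, p = q ++ Dir.down :: r ∧
      GTerm.index t p = some (.var (lamDepth r)) ∧ n' = (t, q) := by
  rcases trans_cases h with ⟨t', p', y, he, hl, _, _⟩ | ⟨t', q, r, he, hl, hi, hn⟩
  · exact ((ofDir_ne_up y) hl.symm).elim
  · injection he with h1 h2
    subst h1; subst h2
    exact ⟨q, r, rfl, hi, hn⟩

theorem shape_of_valid_left {t : GTerm} {p : Pos} (hv : (p ++ [Dir.left]) ∈ Valid t) :
    ∃ a b, GTerm.index t p = some (.app a b) := by
  simp only [Valid, Set.mem_setOf_eq, GTerm.index_append] at hv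
  cases h : GTerm.index t p with
  | none => rw [h] at hv; simp at hv
  | some u =>
    rw [h] at hv
    cases u <;> simp [GTerm.index] at hv ⊢

theorem shape_of_valid_down {t : GTerm} {p : Pos} (hv : (p ++ [Dir.down]) ∈ Valid t) :
    ∃ a, GTerm.index t p = some (.lam a) := by
  simp only [Valid, Set.mem_setOf_eq, GTerm.index_append] at hv
  cases h : GTerm.index t p with
  | none => rw [h] at hv; simp at hv
  | some u =>
    rw [h] at hv
    cases u <;> simp [GTerm.index] at hv ⊢

/-! ### Walking along directions preserves bisimilarity -/

theorem bisim_walk (s : Pos) : ∀ {t₁ t₂ : GTerm} {p₁ p₂ : Pos},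
    Bisim (t₁, p₁) (t₂, p₂) → p₂ ∈ Valid t₂ → (p₁ ++ s) ∈ Valid t₁ →
    (p₂ ++ s) ∈ Valid t₂ ∧ Bisim (t₁, p₁ ++ s) (t₂, p₂ ++ s) := by
  induction s with
  | nil =>
    intro t₁ t₂ p₁ p₂ hb hv2 _
    simpa using ⟨hv2, hb⟩
  | cons x s ih =>
    intro t₁ t₂ p₁ p₂ hb hv2 hv
    have hv1 : (p₁ ++ [x]) ∈ Valid t₁ := valid_prefix ⟨s, by simp⟩ hv
    have ht1 : Trans (t₁, p₁) (Lab.ofDir x) (t₁, p₁ ++ [x]) := Trans.dir t₁ p₁ x hv1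
    obtain ⟨n₂', ht₂, hb'⟩ := bisim_step hb ht1
    obtain ⟨rfl, hv2'⟩ := trans_dir_inv ht₂
    have hv1' : ((p₁ ++ [x]) ++ s) ∈ Valid t₁ := by simpa using hv
    obtain ⟨hvr, hbr⟩ := ih hb' hv2' hv1'
    exact ⟨by simpa using hvr, by simpa using hbr⟩

/-- Iterated appending of a word. -/
def pRep (s : Pos) : ℕ → Pos
  | 0 => []
  | n + 1 => pRep s n ++ s

theorem pRep_length (s : Pos) : ∀ n, (pRep s n).length = n * s.length
  | 0 => by simp [pRep]
  | n + 1 => by simp [pRep, pRep_length s n, Nat.succ_mul]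

/-- A node cannot be bisimilar to a strictly deeper node in the same term. -/
theorem not_bisim_self_extend {t : GTerm} {q s : Pos} (hs : s ≠ [])
    (hv : (q ++ s) ∈ Valid t) (hb : Bisim (t, q) (t, q ++ s)) : False := by
  have key : ∀ n, (q ++ pRep s (n + 1)) ∈ Valid t ∧
      Bisim (t, q ++ pRep s n) (t, q ++ pRep s (n + 1)) := by
    intro n
    induction n with
    | zero => exact ⟨by simpa [pRep] using hv, by simpa [pRep] using hb⟩
    | succ n ih =>
      obtain ⟨ihv, ihb⟩ := ih
      have hv1 : ((q ++ pRep s n) ++ s) ∈ Valid t := by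
        simpa [pRep, List.append_assoc] using ihv
      have hv2 : (q ++ pRep s (n + 1)) ∈ Valid t := ihv
      obtain ⟨hvr, hbr⟩ := bisim_walk s ihb hv2 hv1
      refine ⟨by simpa [pRep, List.append_assoc] using hvr,
        by simpa [pRep, List.append_assoc] using hbr⟩
  have hlen : ∀ n, (q ++ pRep s (n + 1)).length < gsize t := fun n =>
    length_lt_gsize _ _ (key n).1
  have hs1 : 1 ≤ s.length := by
    cases s with
    | nil => exact absurd rfl hs
    | cons a l => simp
  have h2 := hlen (gsize t)
  simp only [List.length_append, pRep_length] at h2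
  nlinarith [hs1, h2]

/-! ### Prefix lemmas -/

theorem prefix_total : ∀ {l₁ l₂ l : List Dir}, l₁ <+: l → l₂ <+: l →
    l₁ <+: l₂ ∨ l₂ <+: l₁
  | [], _, _, _, _ => Or.inl (List.nil_prefix)
  | _, [], _, _, _ => Or.inr (List.nil_prefix)
  | a :: l₁, b :: l₂, [], h₁, _ => absurd h₁ (by simp)
  | a :: l₁, b :: l₂, c :: l, h₁, h₂ => by
    rw [List.cons_prefix_cons] at h₁ h₂
    obtain ⟨rfl, h₁⟩ := h₁
    obtain ⟨rfl, h₂⟩ := h₂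
    rcases prefix_total h₁ h₂ with h | h
    · exact Or.inl (by rw [List.cons_prefix_cons]; exact ⟨rfl, h⟩)
    · exact Or.inr (by rw [List.cons_prefix_cons]; exact ⟨rfl, h⟩)

theorem prefix_snoc {q p : Pos} {x : Dir} (h : q <+: p ++ [x]) :
    q = p ++ [x] ∨ q <+: p := by
  obtain ⟨s, hs⟩ := h
  rcases List.eq_nil_or_concat s with rfl | ⟨s', y, rfl⟩
  · left; simpa using hs
  · right
    rw [List.concat_eq_append, ← List.append_assoc] at hs
    obtain ⟨h1, _⟩ := List.append_inj' hs rfl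
    exact ⟨s', h1⟩

/-! ### The main induction -/

theorem index_eq_of_bisim (t₁ t₂ : GTerm) (hp₁ : t₁.IsPure) (hp₂ : t₂.IsPure)
    (c₁ : Closed t₁) (c₂ : Closed t₂) :
    ∀ (u₁ : GTerm) (p : Pos) (u₂ : GTerm),
      GTerm.index t₁ p = some u₁ → GTerm.index t₂ p = some u₂ →
      (∀ q, q <+: p → Bisim (t₁, q) (t₂, q)) → u₁ = u₂ := by
  intro u₁
  induction u₁ with
  | var i =>
    intro p u₂ h₁ h₂ hinv
    have hb := hinv p List.prefix_rfl
    have hi : i < lamDepth p := var_lt_of_closed c₁ h₁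
    obtain ⟨q₁, r₁, hpe₁, hr₁⟩ := exists_split p i hi
    have ht : Trans (t₁, p) Lab.up (t₁, q₁) := by
      rw [hpe₁]
      exact Trans.up t₁ q₁ r₁ (by rw [← hpe₁, h₁, hr₁])
    obtain ⟨n₂', ht₂, hb'⟩ := bisim_step hb ht
    obtain ⟨q₂, r₂, hpe₂, h₂', rfl⟩ := trans_up_inv ht₂
    rw [h₂] at h₂'
    obtain rfl : u₂ = GTerm.var (lamDepth r₂) := by injection h₂'
    by_cases hq : q₁ = q₂
    · subst hq
      rw [hpe₁] at hpe₂
      have : r₁ = r₂ := by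
        have := List.append_cancel_left hpe₂
        injection this
      rw [← hr₁, this]
    · exfalso
      have hq₁p : q₁ <+: p := ⟨_, hpe₁.symm⟩
      have hq₂p : q₂ <+: p := ⟨_, hpe₂.symm⟩
      have hpv₁ : p ∈ Valid t₁ := by simp [Valid, Set.mem_setOf_eq, h₁]
      have hpv₂ : p ∈ Valid t₂ := by simp [Valid, Set.mem_setOf_eq, h₂]
      rcases prefix_total hq₁p hq₂p with ⟨s, rfl⟩ | ⟨s, rfl⟩
      · have hs : s ≠ [] := by rintro rfl; simp at hq
        exact not_bisim_self_extend hs (valid_prefix hq₂p hpv₂)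
          (bisim_trans (bisim_symm (hinv q₁ hq₁p)) hb')
      · have hs : s ≠ [] := by rintro rfl; simp at hq
        exact not_bisim_self_extend hs (valid_prefix hq₁p hpv₁)
          (bisim_trans (hinv q₂ hq₂p) (bisim_symm hb'))
  | app a b iha ihb =>
    intro p u₂ h₁ h₂ hinv
    have hb := hinv p List.prefix_rfl
    have hpv₂ : p ∈ Valid t₂ := by simp [Valid, Set.mem_setOf_eq, h₂]
    have hvL : (p ++ [Dir.left]) ∈ Valid t₁ := by
      simp [Valid, Set.mem_setOf_eq, GTerm.index_append, h₁, GTerm.index]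
    have hvR : (p ++ [Dir.right]) ∈ Valid t₁ := by
      simp [Valid, Set.mem_setOf_eq, GTerm.index_append, h₁, GTerm.index]
    have htL : Trans (t₁, p) (Lab.ofDir Dir.left) (t₁, p ++ [Dir.left]) :=
      Trans.dir t₁ p Dir.left hvL
    obtain ⟨n₂', ht₂, _⟩ := bisim_step hb htL
    obtain ⟨rfl, hv₂⟩ := trans_dir_inv ht₂
    obtain ⟨a', b', h₂'⟩ := shape_of_valid_left hv₂
    obtain rfl : u₂ = GTerm.app a' b' := by rw [h₂] at h₂'; injection h₂'
    have idx : ∀ (t : GTerm) (c d : GTerm), GTerm.index t p = some (.app c d) →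
        GTerm.index t (p ++ [Dir.left]) = some c ∧
        GTerm.index t (p ++ [Dir.right]) = some d := by
      intro t c d h
      rw [GTerm.index_append, GTerm.index_append, h]
      exact ⟨by simp [GTerm.index], by simp [GTerm.index]⟩
    obtain ⟨ha₁, hb₁⟩ := idx t₁ a b h₁
    obtain ⟨ha₂, hb₂⟩ := idx t₂ a' b' h₂
    have hinvL : ∀ q, q <+: p ++ [Dir.left] → Bisim (t₁, q) (t₂, q) := by
      intro q hq
      rcases prefix_snoc hq with rfl | hq'
      · exact (bisim_walk [Dir.left] hb hpv₂ hvL).2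
      · exact hinv q hq'
    have hinvR : ∀ q, q <+: p ++ [Dir.right] → Bisim (t₁, q) (t₂, q) := by
      intro q hq
      rcases prefix_snoc hq with rfl | hq'
      · exact (bisim_walk [Dir.right] hb hpv₂ hvR).2
      · exact hinv q hq'
    rw [iha (p ++ [Dir.left]) a' ha₁ ha₂ hinvL, ihb (p ++ [Dir.right]) b' hb₁ hb₂ hinvR]
  | lam a iha =>
    intro p u₂ h₁ h₂ hinv
    have hb := hinv p List.prefix_rfl
    have hpv₂ : p ∈ Valid t₂ := by simp [Valid, Set.mem_setOf_eq, h₂]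
    have hvD : (p ++ [Dir.down]) ∈ Valid t₁ := by
      simp [Valid, Set.mem_setOf_eq, GTerm.index_append, h₁, GTerm.index]
    have htD : Trans (t₁, p) (Lab.ofDir Dir.down) (t₁, p ++ [Dir.down]) :=
      Trans.dir t₁ p Dir.down hvD
    obtain ⟨n₂', ht₂, _⟩ := bisim_step hb htD
    obtain ⟨rfl, hv₂⟩ := trans_dir_inv ht₂
    obtain ⟨a', h₂'⟩ := shape_of_valid_down hv₂
    obtain rfl : u₂ = GTerm.lam a' := by rw [h₂] at h₂'; injection h₂'
    have ha₁ : GTerm.index t₁ (p ++ [Dir.down]) = some a := by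
      rw [GTerm.index_append, h₁]; simp [GTerm.index]
    have ha₂ : GTerm.index t₂ (p ++ [Dir.down]) = some a' := by
      rw [GTerm.index_append, h₂]; simp [GTerm.index]
    have hinvD : ∀ q, q <+: p ++ [Dir.down] → Bisim (t₁, q) (t₂, q) := by
      intro q hq
      rcases prefix_snoc hq with rfl | hq'
      · exact (bisim_walk [Dir.down] hb hpv₂ hvD).2
      · exact hinv q hq'
    rw [iha (p ++ [Dir.down]) a' ha₁ ha₂ hinvD]
  | gvar a =>
    intro p u₂ h₁ h₂ hinv
    exact (isPure_index p t₁ _ hp₁ h₁).elim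

/-- closed λ-terms are bisimilar (at the root) iff they are equal. -/
theorem bisim_closed_iff_eq (t₁ t₂ : GTerm)
    (h₁ : t₁.IsPure) (h₂ : t₂.IsPure) (c₁ : Closed t₁) (c₂ : Closed t₂) :
    Bisim (t₁, ([] : Pos)) (t₂, ([] : Pos)) ↔ t₁ = t₂ := by
  constructor
  · intro hb
    refine index_eq_of_bisim t₁ t₂ h₁ h₂ c₁ c₂ t₁ [] t₂ (by simp [GTerm.index]) (by simp [GTerm.index]) ?_
    intro q hq
    rw [List.prefix_nil] at hq
    subst hq
    exact hb
  · rintro rfl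
    exact bisim_refl _

end HashAlpha
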